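/- For every t ∈ ℝ one has S(ω_t|ω) = -∫₀^t tr(ω·σ_s) ds; equivalently, for every t ≠ 0, S(ω_t|ω) = -t·tr(ω·Σ^t). -/

import Mathlib

open Matrix MeasureTheory Filter Topology
open scoped ComplexOrder

/-- Functional calculus for a Hermitian complex matrix: apply `f : ℝ → ℝ` to the eigenvalues
(junk value `0` if the matrix is not Hermitian). -/
noncomputable def matCFC {n : ℕ} (f : ℝ → ℝ) (A : Matrix (Fin n) (Fin n) ℂ) :
    Matrix (Fin n) (Fin n) ℂ :=
  if h : A.IsHermitian then h.cfc f else 0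

/-- Functional-calculus logarithm of a (positive-definite Hermitian) matrix. -/
noncomputable def mlog {n : ℕ} (A : Matrix (Fin n) (Fin n) ℂ) : Matrix (Fin n) (Fin n) ℂ :=
  matCFC Real.log A

/-- Functional-calculus real power of a (positive-definite Hermitian) matrix. -/
noncomputable def mpow {n : ℕ} (A : Matrix (Fin n) (Fin n) ℂ) (q : ℝ) :
    Matrix (Fin n) (Fin n) ℂ :=
  matCFC (fun x => x ^ q) A

/-- Matrix exponential. -/
noncomputable def mexp {n : ℕ} (A : Matrix (Fin n) (Fin n) ℂ) : Matrix (Fin n) (Fin n) ℂ :=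
  NormedSpace.exp A

/-- Heisenberg evolution `τ^t(A) = e^{itH} A e^{-itH}`. -/
noncomputable def heisenberg {n : ℕ} (H : Matrix (Fin n) (Fin n) ℂ) (t : ℝ)
    (A : Matrix (Fin n) (Fin n) ℂ) : Matrix (Fin n) (Fin n) ℂ :=
  mexp ((Complex.I * t) • H) * A * mexp ((-(Complex.I * t)) • H)

/-- Schrödinger evolution of the state, `ω_t = e^{-itH} ω e^{itH}`. -/
noncomputable def stateT {n : ℕ} (H ω : Matrix (Fin n) (Fin n) ℂ) (t : ℝ) :
    Matrix (Fin n) (Fin n) ℂ :=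
  mexp ((-(Complex.I * t)) • H) * ω * mexp ((Complex.I * t) • H)

/-- Entropy production observable `σ = -i (H log ω - log ω H)`. -/
noncomputable def entropyProd {n : ℕ} (H ω : Matrix (Fin n) (Fin n) ℂ) :
    Matrix (Fin n) (Fin n) ℂ :=
  (-Complex.I) • (H * mlog ω - mlog ω * H)

/-- `σ_s = τ^s(σ)`. -/
noncomputable def sigmaAt {n : ℕ} (H ω : Matrix (Fin n) (Fin n) ℂ) (s : ℝ) :
    Matrix (Fin n) (Fin n) ℂ :=
  heisenberg H s (entropyProd H ω)

/-- `∫₀^t σ_s ds` (entrywise integral). -/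
noncomputable def intSigma {n : ℕ} (H ω : Matrix (Fin n) (Fin n) ℂ) (t : ℝ) :
    Matrix (Fin n) (Fin n) ℂ :=
  Matrix.of fun i j => ∫ s in (0:ℝ)..t, sigmaAt H ω s i j

/-- Mean entropy production rate `Σ^t = (1/t) ∫₀^t σ_s ds`. -/
noncomputable def meanSigma {n : ℕ} (H ω : Matrix (Fin n) (Fin n) ℂ) (t : ℝ) :
    Matrix (Fin n) (Fin n) ℂ :=
  ((t : ℂ)⁻¹) • intSigma H ω t

/-- The Evans–Searles functional `ES_t(α) = log tr(ω e^{-α ∫₀^t σ_s ds})`. -/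
noncomputable def ES {n : ℕ} (H ω : Matrix (Fin n) (Fin n) ℂ) (t α : ℝ) : ℝ :=
  Real.log ((Matrix.trace (ω * mexp ((-α) • intSigma H ω t))).re)

/-- The entropic pressure functional `e_{p,t}(α)` for `0 < p < ∞`. -/
noncomputable def ePressure {n : ℕ} (H ω : Matrix (Fin n) (Fin n) ℂ) (p t α : ℝ) : ℝ :=
  Real.log ((Matrix.trace (mpow
    (mpow ω ((1 - α)/p) * mpow (stateT H ω t) (2*α/p) * mpow ω ((1 - α)/p)) (p/2))).re)

/-- The entropic pressure functional `e_{∞,t}(α)`. -/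
noncomputable def ePressureInf {n : ℕ} (H ω : Matrix (Fin n) (Fin n) ℂ) (t α : ℝ) : ℝ :=
  Real.log ((Matrix.trace (mexp ((1 - α) • mlog ω + α • mlog (stateT H ω t)))).re)

/-! Conjugation by the unitary `e^{-itH}` commutes with the functional calculus, so
`log ω_t = e^{-itH} log ω e^{itH}` and `tr(ω_t log ω_t) = tr(ω log ω)`; by cyclicity of the trace,
`S(ω_t|ω) = tr(ω τ^t(log ω)) - tr(ω log ω)`. Since `d/ds τ^s(A) = τ^s(i[H, A])` and
`i[H, log ω] = -σ`, the fundamental theorem of calculus gives `S(ω_t|ω) = -∫₀^t tr(ω σ_s) ds`. -/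

lemma Matrix.trace_unitary_conj_mul {m R : Type*} [Fintype m] [DecidableEq m] [CommRing R]
    [StarRing R] {U : Matrix m m R} (hU : U ∈ unitary _) (A B : Matrix m m R) :
    trace (U * A * star U * (U * B * star U)) = trace (A * B) := by
  rw [show U * A * star U * (U * B * star U) = U * (A * B) * star U by
    simp only [mul_assoc, ← mul_assoc (star U) U, Unitary.star_mul_self_of_mem hU, one_mul],
    trace_mul_cycle, Unitary.star_mul_self_of_mem hU, one_mul]

lemma Matrix.trace_mul_of_intervalIntegral {m 𝕜 : Type*} [Fintype m] [RCLike 𝕜]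
    (A : Matrix m m 𝕜) {F : ℝ → Matrix m m 𝕜} {a b : ℝ}
    (hF : ∀ i j, IntervalIntegrable (fun s => F s i j) volume a b) :
    trace (A * of fun i j => ∫ s in a..b, F s i j) = ∫ s in a..b, trace (A * F s) := by
  have hentry : ∀ i j, IntervalIntegrable (fun s => A i j * F s j i) volume a b :=
    fun i j => (hF j i).const_mul (A i j)
  have hrow : ∀ i, IntervalIntegrable (fun s => ∑ j, A i j * F s j i) volume a b := fun i => by
    simpa only [Finset.sum_fn] using IntervalIntegrable.sum Finset.univ fun j _ => hentry i j
  simp only [trace, diag, mul_apply, of_apply, ← intervalIntegral.integral_const_mul]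
  rw [intervalIntegral.integral_finsetSum fun i _ => hrow i]
  simp only [intervalIntegral.integral_finsetSum fun j _ => hentry _ j]

section FunctionalCalculus

variable {n : ℕ}

lemma matCFC_eq_cfc (f : ℝ → ℝ) (A : Matrix (Fin n) (Fin n) ℂ) : matCFC f A = cfc f A := by
  unfold matCFC
  split_ifs with hA
  · exact (hA.cfc_eq f).symm
  · exact (cfc_apply_of_not_predicate A hA).symm

lemma matCFC_unitary_conj (f : ℝ → ℝ) {U A : Matrix (Fin n) (Fin n) ℂ} (hU : U ∈ unitary _)
    (hA : A.IsHermitian) : matCFC f (U * A * star U) = U * matCFC f A * star U := by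
  simp only [matCFC_eq_cfc]
  exact (StarAlgHomClass.map_cfc (S := ℂ) (Unitary.conjStarAlgAut ℂ _ ⟨U, hU⟩) f A
    (hf := A.finite_real_spectrum.continuousOn f)
    (hφ := (continuous_const.matrix_mul continuous_id).matrix_mul continuous_const)
    (ha := hA.isSelfAdjoint) (hφa := hA.isSelfAdjoint.conjugate _)).symm

lemma mexp_mem_unitary {X : Matrix (Fin n) (Fin n) ℂ} (hX : X ∈ skewAdjoint _) :
    mexp X ∈ unitary (Matrix (Fin n) (Fin n) ℂ) := by
  rw [Unitary.mem_iff, mexp, NormedSpace.star_exp, skewAdjoint.mem_iff.mp hX,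
    ← Matrix.exp_add_of_commute _ _ (Commute.refl X).neg_left,
    ← Matrix.exp_add_of_commute _ _ (Commute.refl X).neg_right, neg_add_cancel, add_neg_cancel,
    NormedSpace.exp_zero, and_self]

lemma star_mexp_of_mem_skewAdjoint {X : Matrix (Fin n) (Fin n) ℂ} (hX : X ∈ skewAdjoint _) :
    star (mexp X) = mexp (-X) := by
  rw [mexp, NormedSpace.star_exp, skewAdjoint.mem_iff.mp hX, mexp]

end FunctionalCalculus

section Dynamics

variable {n : ℕ} {H : Matrix (Fin n) (Fin n) ℂ}

lemma neg_I_mul_smul_mem_skewAdjoint (hH : H.IsHermitian) (t : ℝ) :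
    (-(Complex.I * t)) • H ∈ skewAdjoint (Matrix (Fin n) (Fin n) ℂ) :=
  IsSelfAdjoint.smul_mem_skewAdjoint (by simp [skewAdjoint.mem_iff]) hH.isSelfAdjoint

lemma star_mexp_neg_I_mul_smul (hH : H.IsHermitian) (t : ℝ) :
    star (mexp ((-(Complex.I * t)) • H)) = mexp ((Complex.I * t) • H) := by
  rw [star_mexp_of_mem_skewAdjoint (neg_I_mul_smul_mem_skewAdjoint hH t), neg_smul, neg_neg]

lemma mlog_stateT (hH : H.IsHermitian) {ω : Matrix (Fin n) (Fin n) ℂ} (hω : ω.IsHermitian)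
    (t : ℝ) : mlog (stateT H ω t)
      = mexp ((-(Complex.I * t)) • H) * mlog ω * mexp ((Complex.I * t) • H) := by
  rw [stateT, mlog, ← star_mexp_neg_I_mul_smul hH]
  exact matCFC_unitary_conj _ (mexp_mem_unitary (neg_I_mul_smul_mem_skewAdjoint hH t)) hω

lemma trace_stateT_mul (H ω A : Matrix (Fin n) (Fin n) ℂ) (t : ℝ) :
    trace (stateT H ω t * A) = trace (ω * heisenberg H t A) := by
  simp only [stateT, heisenberg, mul_assoc]
  rw [trace_mul_comm]
  simp only [mul_assoc]

lemma relEntropy_stateT (hH : H.IsHermitian) {ω : Matrix (Fin n) (Fin n) ℂ}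
    (hω : ω.IsHermitian) (t : ℝ) :
    trace (stateT H ω t * (mlog ω - mlog (stateT H ω t)))
      = trace (ω * heisenberg H t (mlog ω)) - trace (ω * mlog ω) := by
  rw [Matrix.mul_sub, trace_sub, trace_stateT_mul, mlog_stateT hH hω, stateT,
    ← star_mexp_neg_I_mul_smul hH,
    trace_unitary_conj_mul (mexp_mem_unitary (neg_I_mul_smul_mem_skewAdjoint hH t))]

lemma heisenberg_zero (H A : Matrix (Fin n) (Fin n) ℂ) : heisenberg H 0 A = A := by
  simp [heisenberg, mexp]

lemma heisenberg_I_smul_commutator_mlog (H ω : Matrix (Fin n) (Fin n) ℂ) (t : ℝ) :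
    heisenberg H t (Complex.I • (H * mlog ω - mlog ω * H)) = -sigmaAt H ω t := by
  simp only [sigmaAt, entropyProd, heisenberg, neg_smul, Matrix.mul_neg, Matrix.neg_mul, neg_neg]

end Dynamics

section Derivative

attribute [local instance] Matrix.linftyOpNormedAddCommGroup Matrix.linftyOpNormedRing
  Matrix.linftyOpNormedAlgebra

variable {n : ℕ}

lemma heisenberg_eq_exp_smul (H A : Matrix (Fin n) (Fin n) ℂ) (t : ℝ) :
    heisenberg H t A
      = NormedSpace.exp (t • (Complex.I • H)) * A * NormedSpace.exp (t • -(Complex.I • H)) := by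
  have hreal : ∀ c : ℂ, (c * t) • H = t • c • H := fun c => by
    rw [mul_comm, mul_smul, Complex.coe_smul]
  rw [heisenberg, mexp, mexp, ← neg_mul, hreal, hreal, neg_smul]

lemma hasDerivAt_heisenberg (H A : Matrix (Fin n) (Fin n) ℂ) (t : ℝ) :
    HasDerivAt (fun s => heisenberg H s A) (heisenberg H t (Complex.I • (H * A - A * H))) t := by
  simp only [heisenberg_eq_exp_smul]
  refine (((hasDerivAt_exp_smul_const (𝕂 := ℝ) (Complex.I • H) t).mul_const A).mul
    (hasDerivAt_exp_smul_const' (𝕂 := ℝ) (-(Complex.I • H)) t)).congr_deriv ?_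
  simp only [Matrix.mul_smul, Matrix.smul_mul, Matrix.mul_sub, Matrix.sub_mul, Matrix.mul_neg,
    Matrix.neg_mul, mul_assoc, smul_sub, smul_neg]
  abel

lemma continuous_heisenberg (H A : Matrix (Fin n) (Fin n) ℂ) :
    Continuous fun s => heisenberg H s A :=
  continuous_iff_continuousAt.2 fun t => (hasDerivAt_heisenberg H A t).continuousAt

lemma HasDerivAt.matrix_trace {f : ℝ → Matrix (Fin n) (Fin n) ℂ} {f' : Matrix (Fin n) (Fin n) ℂ}
    {t : ℝ} (h : HasDerivAt f f' t) : HasDerivAt (fun s => trace (f s)) (trace f') t :=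
  let traceCLM : Matrix (Fin n) (Fin n) ℂ →L[ℝ] ℂ :=
    LinearMap.toContinuousLinearMap ((traceLinearMap (Fin n) ℂ ℂ).restrictScalars ℝ)
  traceCLM.hasFDerivAt.comp_hasDerivAt t h

lemma hasDerivAt_trace_mul_heisenberg_mlog (H ω : Matrix (Fin n) (Fin n) ℂ) (t : ℝ) :
    HasDerivAt (fun s => trace (ω * heisenberg H s (mlog ω))) (-trace (ω * sigmaAt H ω t)) t := by
  have h := ((hasDerivAt_heisenberg H (mlog ω) t).const_mul ω).matrix_trace
  rwa [heisenberg_I_smul_commutator_mlog, Matrix.mul_neg, trace_neg] at h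

lemma integral_trace_mul_sigmaAt (H ω : Matrix (Fin n) (Fin n) ℂ) (t : ℝ) :
    ∫ s in (0 : ℝ)..t, trace (ω * sigmaAt H ω s)
      = trace (ω * mlog ω) - trace (ω * heisenberg H t (mlog ω)) := by
  have hcont : Continuous fun s => trace (ω * sigmaAt H ω s) :=
    (continuous_const.matrix_mul (continuous_heisenberg H _)).matrix_trace
  rw [intervalIntegral.integral_eq_sub_of_hasDerivAt
    (f := fun s => -trace (ω * heisenberg H s (mlog ω)))
    (fun s _ => neg_neg (trace (ω * sigmaAt H ω s)) ▸
      (hasDerivAt_trace_mul_heisenberg_mlog H ω s).neg)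
    (hcont.intervalIntegrable 0 t), heisenberg_zero, neg_sub_neg]

end Derivative

lemma trace_mul_intSigma {n : ℕ} (H ω : Matrix (Fin n) (Fin n) ℂ) (t : ℝ) :
    trace (ω * intSigma H ω t) = ∫ s in (0 : ℝ)..t, trace (ω * sigmaAt H ω s) :=
  trace_mul_of_intervalIntegral ω fun i j =>
    ((continuous_heisenberg H _).matrix_elem i j).intervalIntegrable 0 t

theorem stmt1_general {n : ℕ} (H ω : Matrix (Fin n) (Fin n) ℂ)
    (hH : H.IsHermitian) (hω : ω.PosDef) :
    (∀ t : ℝ, Matrix.trace (stateT H ω t * (mlog ω - mlog (stateT H ω t)))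
        = - ∫ s in (0:ℝ)..t, Matrix.trace (ω * sigmaAt H ω s)) ∧
    (∀ t : ℝ, t ≠ 0 → Matrix.trace (stateT H ω t * (mlog ω - mlog (stateT H ω t)))
        = -(t : ℂ) * Matrix.trace (ω * meanSigma H ω t)) := by
  have integral_form : ∀ t : ℝ, trace (stateT H ω t * (mlog ω - mlog (stateT H ω t)))
      = -∫ s in (0 : ℝ)..t, trace (ω * sigmaAt H ω s) := fun t => by
    rw [relEntropy_stateT hH hω.isHermitian, integral_trace_mul_sigmaAt, neg_sub]
  refine ⟨integral_form, fun t ht => ?_⟩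
  rw [integral_form, meanSigma, Matrix.mul_smul, trace_smul, smul_eq_mul, trace_mul_intSigma,
    ← mul_assoc, neg_mul, mul_inv_cancel₀ (Complex.ofReal_ne_zero.2 ht), neg_one_mul]

/-- `S(ω_t|ω) = -∫₀^t tr(ω σ_s) ds`; equivalently for `t ≠ 0`,
`S(ω_t|ω) = -t tr(ω Σ^t)`.  Here `S(ρ|ν) = tr(ρ (log ν - log ρ))`. -/
theorem stmt1 {n : ℕ} (H ω : Matrix (Fin n) (Fin n) ℂ)
    (hH : H.IsHermitian) (hω : ω.PosDef) (htr : ω.trace = 1) :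
    (∀ t : ℝ, Matrix.trace (stateT H ω t * (mlog ω - mlog (stateT H ω t)))
        = - ∫ s in (0:ℝ)..t, Matrix.trace (ω * sigmaAt H ω s)) ∧
    (∀ t : ℝ, t ≠ 0 → Matrix.trace (stateT H ω t * (mlog ω - mlog (stateT H ω t)))
        = -(t : ℂ) * Matrix.trace (ω * meanSigma H ω t)) :=
  stmt1_general H ω hH hω
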